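/- Assume r0 : [0,π] → ℝ satisfies (H1) and (H2). Then the function φ ↦ ∫₀^π H₁(φ,ϕ) dϕ is continuous on [0,π], its infimum κ = inf_{φ∈[0,π]} ∫₀^π H₁(φ,ϕ) dϕ is strictly positive, and for every Ω < κ one has ν_Ω(φ) ≥ κ − Ω > 0 for all φ ∈ [0,π]. -/

import Mathlib

/-!
The coefficients of `F₁ = F(3/2, 3/2; 3; ·)` satisfy `c₀ = 1` and `0 < c_k ≤ 3/(k+3)`, so
`1 ≤ F₁(x) ≤ 1 - 3 log (1 - x)` on `[0, 1)`. For `x = 4 r0(φ) r0(ϕ)/R` one has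
`1 - x = ((r0 φ - r0 ϕ)² + (cos φ - cos ϕ)²)/R`, and `|cos φ - cos ϕ| ≥ (2/π²)(ϕ - φ)²` on
`[0, π]`; with (H2), which bounds `sin ϕ · r0(ϕ)² R^{-3/2}` by `C0` and `R` by `4(C0² + 1)`,
this gives `H₁(φ, ϕ) ≤ A - B log |ϕ - φ|`, a majorant depending on `ϕ - φ` only. After the
substitution `ϕ = φ + t` all integrands are dominated by one integrable function of `t`, so
dominated convergence gives continuity. Off the diagonal `H₁ > 0`, hence every
`∫₀^π H₁(φ, ϕ) dϕ` is positive, and `κ` is a minimum over the compact `[0, π]`.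
-/

open Real Set MeasureTheory intervalIntegral

/-- The Gauss hypergeometric function `F(a,b;c;x) = Σₖ (a)ₖ(b)ₖ/((c)ₖ k!) xᵏ`. -/
noncomputable def hyp (a b c x : ℝ) : ℝ :=
  ∑' k : ℕ, ((ascPochhammer ℝ k).eval a * (ascPochhammer ℝ k).eval b /
    ((ascPochhammer ℝ k).eval c * (Nat.factorial k : ℝ))) * x ^ k

/-- `R(φ,ϕ) = (r0(φ)+r0(ϕ))² + (cos φ − cos ϕ)²`. -/
noncomputable def Rker (r0 : ℝ → ℝ) (φ ϕ : ℝ) : ℝ :=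
  (r0 φ + r0 ϕ) ^ 2 + (Real.cos φ - Real.cos ϕ) ^ 2

/-- `H₁(φ,ϕ) = (1/4) sin ϕ · r0(ϕ)² R(φ,ϕ)^{−3/2} F₁(4 r0(φ) r0(ϕ)/R(φ,ϕ))`,
with `F₁(x) = F(3/2,3/2;3;x)`. -/
noncomputable def H1ker (r0 : ℝ → ℝ) (φ ϕ : ℝ) : ℝ :=
  (1 / 4) * Real.sin ϕ * r0 ϕ ^ 2 * Rker r0 φ ϕ ^ (-(3 / 2) : ℝ) *
    hyp (3 / 2) (3 / 2) 3 (4 * r0 φ * r0 ϕ / Rker r0 φ ϕ)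

/-- `ν̃(φ) = ∫₀^π H₁(φ,ϕ) dϕ`. -/
noncomputable def nuBar (r0 : ℝ → ℝ) (φ : ℝ) : ℝ :=
  ∫ ϕ in (0:ℝ)..π, H1ker r0 φ ϕ

/-- `κ = inf_{φ ∈ [0,π]} ∫₀^π H₁(φ,ϕ) dϕ`. -/
noncomputable def kappa (r0 : ℝ → ℝ) : ℝ :=
  sInf (nuBar r0 '' Set.Icc (0:ℝ) π)

open Filter Topology

noncomputable def hypCoeff (a b c : ℝ) (k : ℕ) : ℝ :=
  (ascPochhammer ℝ k).eval a * (ascPochhammer ℝ k).eval b /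
    ((ascPochhammer ℝ k).eval c * (Nat.factorial k : ℝ))

theorem hyp_eq_tsum (a b c x : ℝ) : hyp a b c x = ∑' k : ℕ, hypCoeff a b c k * x ^ k := rfl

theorem hypCoeff_zero (a b c : ℝ) : hypCoeff a b c 0 = 1 := by simp [hypCoeff]

theorem hypCoeff_pos {a b c : ℝ} (ha : 0 < a) (hb : 0 < b) (hc : 0 < c) (k : ℕ) :
    0 < hypCoeff a b c k := by
  unfold hypCoeff
  have := ascPochhammer_pos k a ha
  have := ascPochhammer_pos k b hb
  have := ascPochhammer_pos k c hc
  positivity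

theorem hypCoeff_succ {a b c : ℝ} (hc : 0 < c) (k : ℕ) :
    hypCoeff a b c (k + 1) = hypCoeff a b c k * ((a + k) * (b + k) / ((c + k) * (k + 1))) := by
  have := (ascPochhammer_pos (S := ℝ) k c hc).ne'
  have : c + k ≠ 0 := by positivity
  rw [hypCoeff, hypCoeff, ascPochhammer_succ_eval, ascPochhammer_succ_eval,
    ascPochhammer_succ_eval, Nat.factorial_succ]
  push_cast
  field_simp

theorem hypCoeff_le (k : ℕ) : hypCoeff (3 / 2) (3 / 2) 3 k ≤ 3 / (k + 3) := by
  induction k with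
  | zero => norm_num [hypCoeff_zero]
  | succ k ih =>
    rw [hypCoeff_succ (by norm_num)]
    calc hypCoeff (3 / 2) (3 / 2) 3 k * ((3 / 2 + k) * (3 / 2 + k) / ((3 + k) * (k + 1)))
        ≤ 3 / (k + 3) * ((3 / 2 + k) * (3 / 2 + k) / ((3 + k) * (k + 1))) := by gcongr
      _ ≤ 3 / ((k + 1 : ℕ) + 3) := by
        push_cast
        rw [div_mul_div_comm, div_le_div_iff₀ (by positivity) (by positivity)]
        nlinarith [sq_nonneg (k : ℝ)]

theorem hypCoeff_le_three (k : ℕ) : hypCoeff (3 / 2) (3 / 2) 3 k ≤ 3 :=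
  (hypCoeff_le k).trans (div_le_self (by norm_num) (by linarith [k.cast_nonneg (α := ℝ)]))

theorem norm_hypCoeff_mul_pow_le (k : ℕ) (x : ℝ) :
    ‖hypCoeff (3 / 2) (3 / 2) 3 k * x ^ k‖ ≤ 3 * |x| ^ k := by
  rw [norm_mul, norm_pow, Real.norm_eq_abs, Real.norm_eq_abs,
    abs_of_pos (hypCoeff_pos (by norm_num) (by norm_num) (by norm_num) k)]
  gcongr
  exact hypCoeff_le_three k

theorem summable_hypCoeff_mul_pow {x : ℝ} (hx : |x| < 1) :
    Summable fun k => hypCoeff (3 / 2) (3 / 2) 3 k * x ^ k :=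
  .of_norm_bounded ((summable_geometric_of_lt_one (abs_nonneg x) hx).mul_left 3)
    fun k => norm_hypCoeff_mul_pow_le k x

theorem continuousOn_hyp : ContinuousOn (hyp (3 / 2) (3 / 2) 3) (Ioo (-1) 1) := by
  intro x hx
  obtain ⟨r, hxr, hr⟩ := exists_between (abs_lt.2 hx)
  have hcont : ContinuousOn (hyp (3 / 2) (3 / 2) 3) (Icc (-r) r) :=
    continuousOn_tsum (fun k => (continuous_const.mul (continuous_pow k)).continuousOn)
      ((summable_geometric_of_lt_one ((abs_nonneg x).trans hxr.le) hr).mul_left 3)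
      fun k y hy => (norm_hypCoeff_mul_pow_le k y).trans (by gcongr; exact abs_le.2 hy)
  exact (hcont.continuousAt (Icc_mem_nhds (abs_lt.1 hxr).1 (abs_lt.1 hxr).2)).continuousWithinAt

theorem one_le_hyp {x : ℝ} (hx₀ : 0 ≤ x) (hx₁ : x < 1) : 1 ≤ hyp (3 / 2) (3 / 2) 3 x := by
  have h := (summable_hypCoeff_mul_pow (abs_lt.2 ⟨by linarith, hx₁⟩)).le_tsum 0
    fun k _ => mul_nonneg (hypCoeff_pos (by norm_num) (by norm_num) (by norm_num) k).le
      (pow_nonneg hx₀ k)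
  simpa [hyp_eq_tsum, hypCoeff_zero] using h

-- termwise comparison with `-log (1 - x) = ∑ xᵏ⁺¹/(k+1)`, using `c_{k+1} ≤ 3/(k+4) ≤ 3/(k+1)`
theorem hyp_le_one_sub_log {x : ℝ} (hx₀ : 0 ≤ x) (hx₁ : x < 1) :
    hyp (3 / 2) (3 / 2) 3 x ≤ 1 - 3 * log (1 - x) := by
  have hx : |x| < 1 := abs_lt.2 ⟨by linarith, hx₁⟩
  have hlog := (hasSum_pow_div_log_of_abs_lt_one hx).mul_left 3
  rw [hyp_eq_tsum, (summable_hypCoeff_mul_pow hx).tsum_eq_zero_add, hypCoeff_zero, pow_zero,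
    mul_one, sub_eq_add_neg, ← mul_neg, ← hlog.tsum_eq]
  refine add_le_add_right (Summable.tsum_le_tsum (fun k => ?_)
    ((summable_nat_add_iff 1).2 (summable_hypCoeff_mul_pow hx)) hlog.summable) 1
  calc hypCoeff (3 / 2) (3 / 2) 3 (k + 1) * x ^ (k + 1)
      ≤ 3 / ((k + 1 : ℕ) + 3) * x ^ (k + 1) := by gcongr; exact hypCoeff_le (k + 1)
    _ ≤ 3 / (k + 1) * x ^ (k + 1) := by gcongr <;> norm_num
    _ = 3 * (x ^ (k + 1) / (k + 1)) := by ring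

theorem cos_two_mul_sub_cos_two_mul_sub_one_add_cos (u v : ℝ) :
    cos (2 * u) - cos (2 * v) - (1 - cos (2 * v - 2 * u)) = 4 * sin u * cos v * sin (v - u) := by
  rw [cos_sub, sin_sub]
  simp only [cos_two_mul, sin_two_mul]
  linear_combination (2 + 2 * cos v ^ 2 - 2 * sin v ^ 2) * sin_sq_add_cos_sq u +
    (2 * sin u ^ 2 + 2 * cos u ^ 2 - 2) * sin_sq_add_cos_sq v

theorem one_sub_cos_sub_le_cos_sub_cos {φ ϕ : ℝ} (hφ : 0 ≤ φ) (hφϕ : φ ≤ ϕ) (hϕ : ϕ ≤ π) :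
    1 - cos (ϕ - φ) ≤ cos φ - cos ϕ := by
  have h := cos_two_mul_sub_cos_two_mul_sub_one_add_cos (φ / 2) (ϕ / 2)
  rw [mul_div_cancel₀ φ two_ne_zero, mul_div_cancel₀ ϕ two_ne_zero] at h
  have h₁ : 0 ≤ sin (φ / 2) := sin_nonneg_of_nonneg_of_le_pi (by linarith) (by linarith)
  have h₂ : 0 ≤ cos (ϕ / 2) := cos_nonneg_of_mem_Icc ⟨by linarith, by linarith⟩
  have h₃ : 0 ≤ sin (ϕ / 2 - φ / 2) := sin_nonneg_of_nonneg_of_le_pi (by linarith) (by linarith)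
  nlinarith [mul_nonneg (mul_nonneg h₁ h₂) h₃]

theorem mul_sq_le_abs_cos_sub_cos {φ ϕ : ℝ} (hφ : φ ∈ Icc 0 π) (hϕ : ϕ ∈ Icc 0 π) :
    2 / π ^ 2 * (ϕ - φ) ^ 2 ≤ |cos φ - cos ϕ| := by
  wlog hle : φ ≤ ϕ generalizing φ ϕ
  · rw [abs_sub_comm, ← neg_sub, neg_sq]
    exact this hϕ hφ (le_of_not_ge hle)
  calc 2 / π ^ 2 * (ϕ - φ) ^ 2 ≤ 1 - cos (ϕ - φ) := by
        linarith [cos_le_one_sub_mul_cos_sq (x := ϕ - φ)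
          (abs_le.2 ⟨by linarith [hφ.2, hϕ.1], by linarith [hφ.1, hϕ.2]⟩)]
    _ ≤ cos φ - cos ϕ := one_sub_cos_sub_le_cos_sub_cos hφ.1 hle hϕ.2
    _ ≤ |cos φ - cos ϕ| := le_abs_self _

theorem pow_four_le_cos_sub_cos_sq {φ ϕ : ℝ} (hφ : φ ∈ Icc 0 π) (hϕ : ϕ ∈ Icc 0 π) :
    4 / π ^ 4 * (ϕ - φ) ^ 4 ≤ (cos φ - cos ϕ) ^ 2 := by
  have h := mul_sq_le_abs_cos_sub_cos hφ hϕ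
  calc 4 / π ^ 4 * (ϕ - φ) ^ 4 = (2 / π ^ 2 * (ϕ - φ) ^ 2) ^ 2 := by ring
    _ ≤ |cos φ - cos ϕ| ^ 2 := by gcongr
    _ = (cos φ - cos ϕ) ^ 2 := sq_abs _

theorem intervalIntegral_pos_of_pos_on_diff_singleton {f : ℝ → ℝ} {a b c : ℝ} (hab : a < b)
    (hf : IntervalIntegrable f volume a b) (hpos : ∀ x ∈ Ioo a b, x ≠ c → 0 < f x) :
    0 < ∫ x in a..b, f x := by
  have hae : ∀ᵐ x ∂volume.restrict (Ioo a b), x ≠ c → 0 < f x :=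
    (ae_restrict_iff' measurableSet_Ioo).2 (.of_forall hpos)
  have hne : ∀ᵐ x ∂volume.restrict (Ioo a b), x ≠ c :=
    ae_restrict_of_ae (Measure.ae_ne volume c)
  have h₀ : 0 ≤ᵐ[volume.restrict (uIoc a b)] f := by
    rw [uIoc_of_le hab.le, ← Measure.restrict_congr_set Ioo_ae_eq_Ioc]
    filter_upwards [hae, hne] with x hx hxc using (hx hxc).le
  rw [integral_pos_iff_support_of_nonneg_ae' h₀ hf]
  refine ⟨hab, ?_⟩
  calc (0 : ENNReal) < volume (Ioo a b \ {c}) := by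
        rw [measure_sdiff_null (measure_singleton c), Real.volume_Ioo]; simpa using hab
    _ ≤ volume (Function.support f ∩ Ioc a b) :=
        measure_mono fun x hx => ⟨(hpos x hx.1 hx.2).ne', Ioo_subset_Ioc_self hx.1⟩

section ShiftedKernel

variable {K : ℝ → ℝ → ℝ} {g : ℝ → ℝ} {a b : ℝ}

noncomputable def shiftedKernel (K : ℝ → ℝ → ℝ) (a b φ : ℝ) : ℝ → ℝ :=
  (Ioc (a - φ) (b - φ)).indicator fun t => K φ (t + φ)

theorem intervalIntegral_eq_integral_shiftedKernel (hab : a ≤ b) (φ : ℝ) :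
    ∫ ϕ in a..b, K φ ϕ = ∫ t, shiftedKernel K a b φ t := by
  rw [shiftedKernel, MeasureTheory.integral_indicator measurableSet_Ioc,
    ← intervalIntegral.integral_of_le (by linarith), intervalIntegral.integral_comp_add_right,
    sub_add_cancel, sub_add_cancel]

theorem aestronglyMeasurable_shiftedKernel
    (hK : ContinuousOn (Function.uncurry K) (Icc a b).offDiag) {φ : ℝ} (hφ : φ ∈ Icc a b) :
    AEStronglyMeasurable (shiftedKernel K a b φ) volume := by
  rw [shiftedKernel, aestronglyMeasurable_indicator_iff measurableSet_Ioc,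
    ← Measure.restrict_congr_set (sdiff_null_ae_eq_self (measure_singleton 0))]
  refine ContinuousOn.aestronglyMeasurable ?_ (measurableSet_Ioc.diff (measurableSet_singleton 0))
  refine hK.comp (f := fun t => (φ, t + φ)) (by fun_prop) fun t ht => ⟨hφ, ?_, ?_⟩
  · exact ⟨by linarith [ht.1.1], by linarith [ht.1.2]⟩
  · simpa using ht.2

theorem norm_shiftedKernel_le
    (hKg : ∀ φ ∈ Icc a b, ∀ ϕ ∈ Icc a b, φ ≠ ϕ → ‖K φ ϕ‖ ≤ g (ϕ - φ))
    {φ : ℝ} (hφ : φ ∈ Icc a b) {t : ℝ} (ht : t ≠ 0) :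
    ‖shiftedKernel K a b φ t‖ ≤ (Ioc (a - b) (b - a)).indicator (fun t => ‖g t‖) t := by
  by_cases hmem : t ∈ Ioc (a - φ) (b - φ)
  · have hsub : t ∈ Ioc (a - b) (b - a) :=
      ⟨by linarith [hmem.1, hφ.2], by linarith [hmem.2, hφ.1]⟩
    rw [shiftedKernel, indicator_of_mem hmem, indicator_of_mem hsub]
    have hϕ : t + φ ∈ Icc a b := ⟨by linarith [hmem.1], by linarith [hmem.2]⟩
    simpa using (hKg φ hφ (t + φ) hϕ (by simpa using ht)).trans (le_norm_self _)
  · rw [shiftedKernel, indicator_of_notMem hmem, norm_zero]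
    exact indicator_nonneg (fun _ _ => norm_nonneg _) t

theorem continuousWithinAt_shiftedKernel
    (hK : ContinuousOn (Function.uncurry K) (Icc a b).offDiag) {φ₀ : ℝ} (hφ₀ : φ₀ ∈ Icc a b)
    {t : ℝ} (ht : t ∉ ({0, a - φ₀, b - φ₀} : Set ℝ)) :
    ContinuousWithinAt (fun φ => shiftedKernel K a b φ t) (Icc a b) φ₀ := by
  simp only [mem_insert_iff, mem_singleton_iff, not_or] at ht
  obtain ⟨ht0, hta, htb⟩ := ht
  have hshift : Continuous fun φ : ℝ => t + φ := by fun_prop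
  by_cases hin : t + φ₀ ∈ Ioo a b
  · have hnhds : (fun φ => t + φ) ⁻¹' Ioo a b ∈ 𝓝 φ₀ :=
      hshift.continuousAt.preimage_mem_nhds (isOpen_Ioo.mem_nhds hin)
    have hK' : ContinuousWithinAt (fun φ => K φ (t + φ)) (Icc a b) φ₀ := by
      refine ContinuousWithinAt.comp_of_preimage_mem_nhdsWithin
        (hK _ ⟨hφ₀, Ioo_subset_Icc_self hin, by simpa using ht0⟩)
        (continuousWithinAt_id.prodMk hshift.continuousWithinAt) ?_
      filter_upwards [self_mem_nhdsWithin, mem_nhdsWithin_of_mem_nhds hnhds] with φ hφ hφt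
      exact ⟨hφ, Ioo_subset_Icc_self hφt, by simpa using ht0⟩
    have hmem : ∀ φ, t + φ ∈ Ioo a b → t ∈ Ioc (a - φ) (b - φ) := fun φ h =>
      ⟨by linarith [h.1], by linarith [h.2]⟩
    refine hK'.congr_of_eventuallyEq ?_ (indicator_of_mem (hmem φ₀ hin) _)
    filter_upwards [mem_nhdsWithin_of_mem_nhds hnhds] with φ hφ
    exact indicator_of_mem (hmem φ hφ) _
  · have hout : t + φ₀ ∉ Icc a b := fun h =>
      hin ⟨h.1.lt_of_ne (by contrapose! hta; linarith), h.2.lt_of_ne (by contrapose! htb; linarith)⟩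
    have hnhds : (fun φ => t + φ) ⁻¹' (Icc a b)ᶜ ∈ 𝓝 φ₀ :=
      hshift.continuousAt.preimage_mem_nhds (isClosed_Icc.isOpen_compl.mem_nhds hout)
    have hnotMem : ∀ φ, t + φ ∉ Icc a b → t ∉ Ioc (a - φ) (b - φ) := fun φ h ht =>
      h ⟨by linarith [ht.1], by linarith [ht.2]⟩
    refine (continuousWithinAt_const (b := (0 : ℝ))).congr_of_eventuallyEq ?_
      (indicator_of_notMem (hnotMem φ₀ hout) _)
    filter_upwards [mem_nhdsWithin_of_mem_nhds hnhds] with φ hφ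
    exact indicator_of_notMem (hnotMem φ hφ) _

variable (hK : ContinuousOn (Function.uncurry K) (Icc a b).offDiag)
  (hg : IntervalIntegrable g volume (a - b) (b - a))
  (hKg : ∀ φ ∈ Icc a b, ∀ ϕ ∈ Icc a b, φ ≠ ϕ → ‖K φ ϕ‖ ≤ g (ϕ - φ))
include hK hg hKg

theorem intervalIntegrable_of_norm_le_comp_sub {φ : ℝ} (hφ : φ ∈ Icc a b) :
    IntervalIntegrable (K φ) volume a b := by
  have hint : Integrable (shiftedKernel K a b φ) :=
    (hg.norm.1.integrable_indicator measurableSet_Ioc).mono'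
      (aestronglyMeasurable_shiftedKernel hK hφ)
      ((Measure.ae_ne volume 0).mono fun t ht => norm_shiftedKernel_le hKg hφ ht)
  have hshift : IntervalIntegrable (fun t => K φ (t + φ)) volume (a - φ) (b - φ) :=
    (intervalIntegrable_iff_integrableOn_Ioc_of_le (by linarith [hφ.1, hφ.2])).2
      ((integrable_indicator_iff measurableSet_Ioc).1 hint)
  simpa using hshift.comp_add_right (-φ)

theorem continuousOn_intervalIntegral_of_norm_le_comp_sub :
    ContinuousOn (fun φ => ∫ ϕ in a..b, K φ ϕ) (Icc a b) := by
  intro φ₀ hφ₀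
  simp only [intervalIntegral_eq_integral_shiftedKernel (hφ₀.1.trans hφ₀.2)]
  refine continuousWithinAt_of_dominated
    (bound := (Ioc (a - b) (b - a)).indicator fun t => ‖g t‖) ?_ ?_
    (hg.norm.1.integrable_indicator measurableSet_Ioc) ?_
  · filter_upwards [self_mem_nhdsWithin] with φ hφ
    exact aestronglyMeasurable_shiftedKernel hK hφ
  · filter_upwards [self_mem_nhdsWithin] with φ hφ
    exact (Measure.ae_ne volume 0).mono fun t ht => norm_shiftedKernel_le hKg hφ ht
  · filter_upwards [compl_mem_ae_iff.2 ((toFinite {0, a - φ₀, b - φ₀}).measure_zero volume)]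
      with t ht using continuousWithinAt_shiftedKernel hK hφ₀ ht

end ShiftedKernel

theorem mul_sq_mul_rpow_neg_three_halves_le {s β R C : ℝ} (hC : 0 ≤ C) (hs : 0 ≤ s)
    (hsβ : s ≤ C * β) (hβ : 0 ≤ β) (hβR : β ^ 2 ≤ R) : s * β ^ 2 * R ^ (-(3 / 2) : ℝ) ≤ C := by
  rcases hβ.eq_or_lt with rfl | hβ
  · simpa using hC
  have hR : 0 < R := (by positivity : (0 : ℝ) < β ^ 2).trans_le hβR
  have hpow : β ^ 3 ≤ R ^ (3 / 2 : ℝ) := by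
    calc β ^ 3 = (β ^ 2) ^ (3 / 2 : ℝ) := by
          rw [← Real.rpow_natCast β 2, ← Real.rpow_mul hβ.le]; norm_num
      _ ≤ R ^ (3 / 2 : ℝ) := by gcongr
  calc s * β ^ 2 * R ^ (-(3 / 2) : ℝ) = s * β ^ 2 / R ^ (3 / 2 : ℝ) := by
        rw [Real.rpow_neg hR.le, ← div_eq_mul_inv]
    _ ≤ s * β ^ 2 / β ^ 3 := by gcongr
    _ = s / β := by field_simp
    _ ≤ C := (div_le_iff₀ hβ).2 hsβ

section Kernel

variable {r0 : ℝ → ℝ} {φ ϕ : ℝ}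

theorem cos_sub_cos_ne_zero (hφ : φ ∈ Icc 0 π) (hϕ : ϕ ∈ Icc 0 π) (hne : φ ≠ ϕ) :
    cos φ - cos ϕ ≠ 0 :=
  sub_ne_zero.2 fun h => hne (injOn_cos hφ hϕ h)

theorem Rker_pos (hφ : φ ∈ Icc 0 π) (hϕ : ϕ ∈ Icc 0 π) (hne : φ ≠ ϕ) : 0 < Rker r0 φ ϕ := by
  have := cos_sub_cos_ne_zero hφ hϕ hne
  unfold Rker; positivity

theorem one_sub_four_mul_div_Rker (hR : Rker r0 φ ϕ ≠ 0) :
    1 - 4 * r0 φ * r0 ϕ / Rker r0 φ ϕ =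
      ((r0 φ - r0 ϕ) ^ 2 + (cos φ - cos ϕ) ^ 2) / Rker r0 φ ϕ := by
  rw [eq_div_iff hR, sub_mul, div_mul_cancel₀ _ hR, Rker]
  ring

theorem four_mul_div_Rker_mem_Ico (hr0 : ∀ ψ ∈ Icc 0 π, 0 ≤ r0 ψ) (hφ : φ ∈ Icc 0 π)
    (hϕ : ϕ ∈ Icc 0 π) (hne : φ ≠ ϕ) : 4 * r0 φ * r0 ϕ / Rker r0 φ ϕ ∈ Ico 0 1 := by
  have hR := Rker_pos (r0 := r0) hφ hϕ hne
  have hD : 0 < 1 - 4 * r0 φ * r0 ϕ / Rker r0 φ ϕ := by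
    have := cos_sub_cos_ne_zero hφ hϕ hne
    rw [one_sub_four_mul_div_Rker hR.ne']
    positivity
  have := hr0 φ hφ
  have := hr0 ϕ hϕ
  exact ⟨by positivity, by linarith⟩

theorem H1ker_pos (hr0 : ∀ ψ ∈ Icc 0 π, 0 ≤ r0 ψ) (hφ : φ ∈ Icc 0 π) (hϕ : ϕ ∈ Ioo 0 π)
    (hne : φ ≠ ϕ) (hr0ϕ : 0 < r0 ϕ) : 0 < H1ker r0 φ ϕ := by
  have hx := four_mul_div_Rker_mem_Ico hr0 hφ (Ioo_subset_Icc_self hϕ) hne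
  have hF := one_le_hyp hx.1 hx.2
  have := Rker_pos (r0 := r0) hφ (Ioo_subset_Icc_self hϕ) hne
  have := sin_pos_of_pos_of_lt_pi hϕ.1 hϕ.2
  unfold H1ker
  positivity

theorem continuousOn_H1ker (hr0c : ContinuousOn r0 (Icc 0 π))
    (hr0 : ∀ ψ ∈ Icc 0 π, 0 ≤ r0 ψ) :
    ContinuousOn (Function.uncurry (H1ker r0)) (Icc 0 π).offDiag := by
  have h₁ : ContinuousOn (fun p : ℝ × ℝ => r0 p.1) (Icc 0 π).offDiag :=
    hr0c.comp continuousOn_fst fun p hp => hp.1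
  have h₂ : ContinuousOn (fun p : ℝ × ℝ => r0 p.2) (Icc 0 π).offDiag :=
    hr0c.comp continuousOn_snd fun p hp => hp.2.1
  have hR : ContinuousOn (fun p : ℝ × ℝ => Rker r0 p.1 p.2) (Icc 0 π).offDiag := by
    unfold Rker
    exact ((h₁.add h₂).pow 2).add (by fun_prop)
  have hR0 : ∀ p ∈ (Icc 0 π).offDiag, Rker r0 p.1 p.2 ≠ 0 := fun p hp =>
    (Rker_pos hp.1 hp.2.1 hp.2.2).ne'
  have hx : ContinuousOn (fun p : ℝ × ℝ => 4 * r0 p.1 * r0 p.2 / Rker r0 p.1 p.2)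
      (Icc 0 π).offDiag := ((continuousOn_const.mul h₁).mul h₂).div hR hR0
  have hF : ContinuousOn
      (fun p : ℝ × ℝ => hyp (3 / 2) (3 / 2) 3 (4 * r0 p.1 * r0 p.2 / Rker r0 p.1 p.2))
      (Icc 0 π).offDiag := by
    refine continuousOn_hyp.comp hx fun p hp => ?_
    have h := four_mul_div_Rker_mem_Ico hr0 hp.1 hp.2.1 hp.2.2
    exact ⟨by linarith [h.1], h.2⟩
  have hRpow : ContinuousOn (fun p : ℝ × ℝ => Rker r0 p.1 p.2 ^ (-(3 / 2) : ℝ))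
      (Icc 0 π).offDiag := hR.rpow_const fun p hp => Or.inl (hR0 p hp)
  unfold H1ker
  exact (((continuousOn_const.mul (continuous_sin.comp continuous_snd).continuousOn).mul
    (h₂.pow 2)).mul hRpow).mul hF

end Kernel

noncomputable def H1Majorant (C0 t : ℝ) : ℝ :=
  C0 * (1 - 3 * (4 * log t - log ((C0 ^ 2 + 1) * π ^ 4))) / 4

theorem intervalIntegrable_H1Majorant (C0 a b : ℝ) :
    IntervalIntegrable (H1Majorant C0) volume a b := by
  unfold H1Majorant
  exact ((intervalIntegrable_const.sub
    (((intervalIntegrable_log'.const_mul 4).sub intervalIntegrable_const).const_mul 3)).const_mul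
      C0).div_const 4

section SinBounds

variable {r0 : ℝ → ℝ} {C0 : ℝ} (hC0 : 0 < C0)
  (hH2 : ∀ φ ∈ Icc (0 : ℝ) π, C0⁻¹ * sin φ ≤ r0 φ ∧ r0 φ ≤ C0 * sin φ)
include hC0 hH2

theorem nonneg_of_sin_bounds : ∀ φ ∈ Icc 0 π, 0 ≤ r0 φ := fun φ hφ =>
  le_trans (by have := sin_nonneg_of_nonneg_of_le_pi hφ.1 hφ.2; positivity) (hH2 φ hφ).1

theorem pos_of_sin_bounds : ∀ φ ∈ Ioo 0 π, 0 < r0 φ := fun φ hφ =>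
  lt_of_lt_of_le (by have := sin_pos_of_pos_of_lt_pi hφ.1 hφ.2; positivity)
    (hH2 φ (Ioo_subset_Icc_self hφ)).1

theorem le_of_sin_bounds : ∀ φ ∈ Icc 0 π, r0 φ ≤ C0 := fun φ hφ =>
  (hH2 φ hφ).2.trans (mul_le_of_le_one_right hC0.le (sin_le_one φ))

theorem Rker_le {φ ϕ : ℝ} (hφ : φ ∈ Icc 0 π) (hϕ : ϕ ∈ Icc 0 π) :
    Rker r0 φ ϕ ≤ 4 * (C0 ^ 2 + 1) := by
  have h₁ := nonneg_of_sin_bounds hC0 hH2 φ hφ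
  have h₂ := nonneg_of_sin_bounds hC0 hH2 ϕ hϕ
  have h₃ := le_of_sin_bounds hC0 hH2 φ hφ
  have h₄ := le_of_sin_bounds hC0 hH2 ϕ hϕ
  have hcos : |cos φ - cos ϕ| ≤ 2 :=
    (abs_sub _ _).trans (by linarith [abs_cos_le_one φ, abs_cos_le_one ϕ])
  unfold Rker
  nlinarith [sq_abs (cos φ - cos ϕ), abs_nonneg (cos φ - cos ϕ)]

theorem log_pow_four_div_le_log_one_sub {φ ϕ : ℝ} (hφ : φ ∈ Icc 0 π) (hϕ : ϕ ∈ Icc 0 π)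
    (hne : φ ≠ ϕ) :
    4 * log (ϕ - φ) - log ((C0 ^ 2 + 1) * π ^ 4) ≤ log (1 - 4 * r0 φ * r0 ϕ / Rker r0 φ ϕ) := by
  have hR := Rker_pos (r0 := r0) hφ hϕ hne
  have ht : (ϕ - φ) ^ 4 ≠ 0 := pow_ne_zero 4 (sub_ne_zero.2 hne.symm)
  have hD : 4 / π ^ 4 * (ϕ - φ) ^ 4 ≤ (r0 φ - r0 ϕ) ^ 2 + (cos φ - cos ϕ) ^ 2 := by
    nlinarith [pow_four_le_cos_sub_cos_sq hφ hϕ, sq_nonneg (r0 φ - r0 ϕ)]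
  have hlog4 : 4 * log (ϕ - φ) = log ((ϕ - φ) ^ 4) := by rw [log_pow]; norm_num
  rw [one_sub_four_mul_div_Rker hR.ne', hlog4, ← log_div ht (by positivity)]
  refine log_le_log (by positivity) ?_
  calc (ϕ - φ) ^ 4 / ((C0 ^ 2 + 1) * π ^ 4)
      = 4 / π ^ 4 * (ϕ - φ) ^ 4 / (4 * (C0 ^ 2 + 1)) := by field_simp
    _ ≤ ((r0 φ - r0 ϕ) ^ 2 + (cos φ - cos ϕ) ^ 2) / Rker r0 φ ϕ :=
        div_le_div₀ (by positivity) hD hR (Rker_le hC0 hH2 hφ hϕ)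

theorem H1ker_le_H1Majorant {φ ϕ : ℝ} (hφ : φ ∈ Icc 0 π) (hϕ : ϕ ∈ Icc 0 π) (hne : φ ≠ ϕ) :
    H1ker r0 φ ϕ ≤ H1Majorant C0 (ϕ - φ) := by
  have hr0 := nonneg_of_sin_bounds hC0 hH2
  have hx := four_mul_div_Rker_mem_Ico hr0 hφ hϕ hne
  have hsin := sin_nonneg_of_nonneg_of_le_pi hϕ.1 hϕ.2
  have hprefactor : sin ϕ * r0 ϕ ^ 2 * Rker r0 φ ϕ ^ (-(3 / 2) : ℝ) ≤ C0 := by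
    refine mul_sq_mul_rpow_neg_three_halves_le hC0.le hsin ((inv_mul_le_iff₀ hC0).1 (hH2 ϕ hϕ).1)
      (hr0 ϕ hϕ) ?_
    unfold Rker
    nlinarith [sq_nonneg (cos φ - cos ϕ), mul_nonneg (hr0 φ hφ) (hr0 ϕ hϕ), sq_nonneg (r0 φ)]
  calc H1ker r0 φ ϕ = sin ϕ * r0 ϕ ^ 2 * Rker r0 φ ϕ ^ (-(3 / 2) : ℝ) *
        hyp (3 / 2) (3 / 2) 3 (4 * r0 φ * r0 ϕ / Rker r0 φ ϕ) / 4 := by unfold H1ker; ring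
    _ ≤ C0 * (1 - 3 * log (1 - 4 * r0 φ * r0 ϕ / Rker r0 φ ϕ)) / 4 := by
        gcongr
        · linarith [one_le_hyp hx.1 hx.2]
        · exact hyp_le_one_sub_log hx.1 hx.2
    _ ≤ H1Majorant C0 (ϕ - φ) := by
        unfold H1Majorant
        gcongr
        exact log_pow_four_div_le_log_one_sub hC0 hH2 hφ hϕ hne

theorem norm_H1ker_le_H1Majorant :
    ∀ φ ∈ Icc 0 π, ∀ ϕ ∈ Icc 0 π, φ ≠ ϕ → ‖H1ker r0 φ ϕ‖ ≤ H1Majorant C0 (ϕ - φ) := by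
  intro φ hφ ϕ hϕ hne
  rw [Real.norm_of_nonneg]
  · exact H1ker_le_H1Majorant hC0 hH2 hφ hϕ hne
  · rcases hϕ.1.eq_or_lt with rfl | h₀
    · simp [H1ker]
    rcases hϕ.2.eq_or_lt with rfl | hπ
    · simp [H1ker]
    exact (H1ker_pos (nonneg_of_sin_bounds hC0 hH2) hφ ⟨h₀, hπ⟩ hne
      (pos_of_sin_bounds hC0 hH2 ϕ ⟨h₀, hπ⟩)).le

theorem continuousOn_nuBar (hr0c : ContinuousOn r0 (Icc 0 π)) :
    ContinuousOn (nuBar r0) (Icc 0 π) :=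
  continuousOn_intervalIntegral_of_norm_le_comp_sub
    (continuousOn_H1ker hr0c (nonneg_of_sin_bounds hC0 hH2))
    (intervalIntegrable_H1Majorant C0 _ _) (norm_H1ker_le_H1Majorant hC0 hH2)

theorem nuBar_pos (hr0c : ContinuousOn r0 (Icc 0 π)) {φ : ℝ} (hφ : φ ∈ Icc 0 π) :
    0 < nuBar r0 φ :=
  intervalIntegral_pos_of_pos_on_diff_singleton pi_pos
    (intervalIntegrable_of_norm_le_comp_sub
      (continuousOn_H1ker hr0c (nonneg_of_sin_bounds hC0 hH2))
      (intervalIntegrable_H1Majorant C0 _ _) (norm_H1ker_le_H1Majorant hC0 hH2) hφ)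
    fun ϕ hϕ hne => H1ker_pos (nonneg_of_sin_bounds hC0 hH2) hφ hϕ (Ne.symm hne)
      (pos_of_sin_bounds hC0 hH2 ϕ hϕ)

end SinBounds

theorem stmt15_general (r0 : ℝ → ℝ)
    (hC2 : ContDiffOn ℝ 2 r0 (Set.Icc 0 π))
    (C0 : ℝ) (hC0 : 0 < C0)
    (hH2 : ∀ φ ∈ Set.Icc (0:ℝ) π, C0⁻¹ * Real.sin φ ≤ r0 φ ∧ r0 φ ≤ C0 * Real.sin φ) :
    ContinuousOn (nuBar r0) (Set.Icc 0 π) ∧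
    0 < kappa r0 ∧
    ∀ Ω : ℝ, Ω < kappa r0 → ∀ φ ∈ Set.Icc (0:ℝ) π,
      0 < kappa r0 - Ω ∧ kappa r0 - Ω ≤ nuBar r0 φ - Ω := by
  have hcont := continuousOn_nuBar hC0 hH2 hC2.continuousOn
  obtain ⟨φmin, hφmin, hmin⟩ :=
    isCompact_Icc.exists_isMinOn (nonempty_Icc.2 pi_pos.le) hcont
  have hκ : kappa r0 = nuBar r0 φmin :=
    IsLeast.csInf_eq ⟨mem_image_of_mem _ hφmin, forall_mem_image.2 fun φ hφ => hmin hφ⟩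
  have hκ_pos : 0 < kappa r0 := hκ ▸ nuBar_pos hC0 hH2 hC2.continuousOn hφmin
  refine ⟨hcont, hκ_pos, fun Ω hΩ φ hφ => ⟨by linarith, ?_⟩⟩
  have hle : kappa r0 ≤ nuBar r0 φ := hκ ▸ hmin hφ
  linarith

/-- Assume `r0` satisfies (H1) and (H2). Then the function `φ ↦ ∫₀^π H₁(φ,ϕ) dϕ` is
continuous on `[0,π]`, its infimum `κ` is strictly positive, and for every `Ω < κ` one has
`ν_Ω(φ) = ∫₀^π H₁(φ,ϕ) dϕ − Ω ≥ κ − Ω > 0` for all `φ ∈ [0,π]`. -/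
theorem stmt15 (r0 : ℝ → ℝ)
    (hC2 : ContDiffOn ℝ 2 r0 (Set.Icc 0 π))
    (h0 : r0 0 = 0) (hπ : r0 π = 0)
    (hpos : ∀ φ ∈ Set.Ioo (0:ℝ) π, 0 < r0 φ)
    (C0 : ℝ) (hC0 : 0 < C0)
    (hH2 : ∀ φ ∈ Set.Icc (0:ℝ) π, C0⁻¹ * Real.sin φ ≤ r0 φ ∧ r0 φ ≤ C0 * Real.sin φ) :
    ContinuousOn (nuBar r0) (Set.Icc 0 π) ∧
    0 < kappa r0 ∧
    ∀ Ω : ℝ, Ω < kappa r0 → ∀ φ ∈ Set.Icc (0:ℝ) π,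
      0 < kappa r0 - Ω ∧ kappa r0 - Ω ≤ nuBar r0 φ - Ω :=
  stmt15_general r0 hC2 C0 hC0 hH2
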